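/- Let M > 0, τ²M² < 1, 0 < λ < √(1 − τ²M²). Consider the Gram recursion on a finite sample Z_{−n+1}, …, Z_0 ∈ R^d with ‖Z_{−i}‖ ≤ M: set G_{i,0} = G_{0,j} = 1/(1 − λ²) and G_{i,j} = 1 + λ² G_{i−1,j−1}/(1 − τ²⟨Z_{−(n−i)}, Z_{−(n−j)}⟩) for 1 ≤ j ≤ i ≤ n, and extend by symmetry. Then G_{i,j} = K(Z^{-n+1}_{-(n-i)}, Z^{-n+1}_{-(n-j)}) where K is the Volterra kernel in closed form, Z^{-n+1}_{-i} denotes the truncated input padded with zeros, and the zero-padding convention makes K(0,0)-type initial values equal 1/(1 − λ²). -/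

import Mathlib

open scoped RealInnerProductSpace

/-- The Volterra reservoir kernel in closed form (index `m` stands for time `-m`). -/
noncomputable def volterraKernel {d : ℕ} (lam τ : ℝ)
    (z z' : ℕ → EuclideanSpace ℝ (Fin d)) : ℝ :=
  1 + ∑' k : ℕ, lam ^ (2 * k + 2) *
    ∏ m ∈ Finset.range (k + 1), (1 - τ ^ 2 * ⟪z m, z' m⟫)⁻¹

/-- The zero-padded truncated input `Z^{-n+1}_{-i} = (…, 0, 0, Z_{-n+1}, …, Z_{-i})`,
as a depth-indexed sequence: depth `m` (time `-i-m`) carries `Z_{-(i+m)}` when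
`i + m ≤ n-1` and `0` otherwise.  Here `Z d` stands for the sample value `Z_{-d}`. -/
noncomputable def paddedInput {d : ℕ} (n : ℕ) (Z : ℕ → EuclideanSpace ℝ (Fin d))
    (i : ℕ) : ℕ → EuclideanSpace ℝ (Fin d) :=
  fun m => if i + m < n then Z (i + m) else 0

/-! Peeling off the first factor of every product in the series shows that the closed-form
kernel satisfies `K(z, z') = 1 + λ² K(z₋₁, z'₋₁) / (1 - τ²⟨z₀, z'₀⟩)`, where `z₋₁` drops the
most recent entry; on the zero-padded inputs this is exactly the Gram recursion, and against
the all-zero input the series is geometric with sum `1/(1-λ²)`, matching the initial values.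
Induction along the diagonals, together with the symmetry of `K`, identifies `G` with `K`.
The series converges because the denominators are bounded below by `1 - τ²M² > λ²`. -/

open Finset

section VolterraKernel

variable {d : ℕ} {lam τ c : ℝ} {z z' : ℕ → EuclideanSpace ℝ (Fin d)}

theorem volterraKernel_comm (lam τ : ℝ) (z z' : ℕ → EuclideanSpace ℝ (Fin d)) :
    volterraKernel lam τ z z' = volterraKernel lam τ z' z := by
  simp only [volterraKernel, real_inner_comm]

theorem volterraKernel_zero_right (hlam : lam ^ 2 < 1) (z : ℕ → EuclideanSpace ℝ (Fin d)) :
    volterraKernel lam τ z 0 = 1 / (1 - lam ^ 2) := by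
  have hterm : ∀ k : ℕ, lam ^ (2 * k + 2) *
      ∏ m ∈ range (k + 1), (1 - τ ^ 2 * ⟪z m, (0 : ℕ → EuclideanSpace ℝ (Fin d)) m⟫)⁻¹ =
      lam ^ 2 * (lam ^ 2) ^ k := fun k => by
    simp only [Pi.zero_apply, inner_zero_right, mul_zero, sub_zero, inv_one, prod_const_one,
      mul_one]
    ring
  have hne : 1 - lam ^ 2 ≠ 0 := by linarith
  rw [volterraKernel, tsum_congr hterm, tsum_mul_left,
    tsum_geometric_of_lt_one (sq_nonneg lam) hlam]
  field_simp
  ring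

section Bounded

variable (hc : ∀ m, c ≤ 1 - τ ^ 2 * ⟪z m, z' m⟫) (hlam : lam ^ 2 < c)
include hc hlam

theorem summable_volterraKernel_terms :
    Summable fun k => lam ^ (2 * k) * ∏ m ∈ range k, (1 - τ ^ 2 * ⟪z m, z' m⟫)⁻¹ := by
  have hc0 : 0 < c := (sq_nonneg lam).trans_lt hlam
  have hpos : ∀ m, 0 < 1 - τ ^ 2 * ⟪z m, z' m⟫ := fun m => hc0.trans_le (hc m)
  refine Summable.of_nonneg_of_le (fun k => ?_) (fun k => ?_)
    (summable_geometric_of_lt_one (by positivity) ((div_lt_one hc0).mpr hlam))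
  · have : 0 ≤ lam ^ (2 * k) := by rw [pow_mul]; positivity
    exact mul_nonneg this (prod_nonneg fun m _ => (inv_pos.mpr (hpos m)).le)
  · calc lam ^ (2 * k) * ∏ m ∈ range k, (1 - τ ^ 2 * ⟪z m, z' m⟫)⁻¹
        ≤ lam ^ (2 * k) * ∏ _m ∈ range k, c⁻¹ := by
          refine mul_le_mul_of_nonneg_left ?_ (by rw [pow_mul]; positivity)
          exact prod_le_prod (fun m _ => (inv_pos.mpr (hpos m)).le)
            (fun m _ => inv_anti₀ hc0 (hc m))
      _ = (lam ^ 2 / c) ^ k := by rw [prod_const, card_range, div_pow, pow_mul, div_eq_mul_inv,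
          inv_pow]

theorem volterraKernel_eq_one_add :
    volterraKernel lam τ z z' = 1 + lam ^ 2 *
      volterraKernel lam τ (fun m => z (m + 1)) (fun m => z' (m + 1)) /
        (1 - τ ^ 2 * ⟪z 0, z' 0⟫) := by
  have hsum := summable_volterraKernel_terms (z := fun m => z (m + 1))
    (z' := fun m => z' (m + 1)) (fun m => hc (m + 1)) hlam
  have hpeel : ∀ k : ℕ, lam ^ (2 * k + 2) * ∏ m ∈ range (k + 1), (1 - τ ^ 2 * ⟪z m, z' m⟫)⁻¹ =
      lam ^ 2 * (1 - τ ^ 2 * ⟪z 0, z' 0⟫)⁻¹ *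
        (lam ^ (2 * k) * ∏ m ∈ range k, (1 - τ ^ 2 * ⟪z (m + 1), z' (m + 1)⟫)⁻¹) := fun k => by
    rw [prod_range_succ', pow_add]
    ring
  have hshift : ∑' k : ℕ, lam ^ (2 * k) *
      ∏ m ∈ range k, (1 - τ ^ 2 * ⟪z (m + 1), z' (m + 1)⟫)⁻¹ =
      volterraKernel lam τ (fun m => z (m + 1)) (fun m => z' (m + 1)) := by
    rw [hsum.tsum_eq_zero_add, volterraKernel]
    simp only [mul_zero, pow_zero, range_zero, prod_empty, mul_one, mul_add]
  rw [volterraKernel, tsum_congr hpeel, tsum_mul_left, hshift, div_eq_mul_inv]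
  ring

end Bounded

end VolterraKernel

section PaddedInput

variable {d n : ℕ} {Z : ℕ → EuclideanSpace ℝ (Fin d)}

theorem paddedInput_succ (a : ℕ) :
    (fun m => paddedInput n Z a (m + 1)) = paddedInput n Z (a + 1) := by
  funext m
  simp only [paddedInput, add_assoc, add_comm 1 m]

theorem paddedInput_apply_zero {a : ℕ} (ha : a < n) : paddedInput n Z a 0 = Z a := by
  simp [paddedInput, ha]

theorem paddedInput_self : paddedInput n Z n = 0 := by
  funext m
  simp [paddedInput]

theorem inner_paddedInput_le {M : ℝ} (hZ : ∀ m, m < n → ‖Z m‖ ≤ M) (a b m : ℕ) :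
    ⟪paddedInput n Z a m, paddedInput n Z b m⟫ ≤ M ^ 2 := by
  unfold paddedInput
  split_ifs with ha hb
  · calc ⟪Z (a + m), Z (b + m)⟫ ≤ ‖Z (a + m)‖ * ‖Z (b + m)‖ := real_inner_le_norm _ _
      _ ≤ M * M := mul_le_mul (hZ _ ha) (hZ _ hb) (norm_nonneg _)
          ((norm_nonneg _).trans (hZ _ ha))
      _ = M ^ 2 := (sq M).symm
  all_goals simp [sq_nonneg]

theorem volterraKernel_paddedInput_eq_one_add {M lam τ : ℝ} (hZ : ∀ m, m < n → ‖Z m‖ ≤ M)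
    (hlam : lam ^ 2 < 1 - τ ^ 2 * M ^ 2) {a b : ℕ} (ha : a < n) (hb : b < n) :
    volterraKernel lam τ (paddedInput n Z a) (paddedInput n Z b) = 1 + lam ^ 2 *
      volterraKernel lam τ (paddedInput n Z (a + 1)) (paddedInput n Z (b + 1)) /
        (1 - τ ^ 2 * ⟪Z a, Z b⟫) := by
  have hc : ∀ m, 1 - τ ^ 2 * M ^ 2 ≤ 1 - τ ^ 2 * ⟪paddedInput n Z a m, paddedInput n Z b m⟫ :=
    fun m => sub_le_sub_left
      (mul_le_mul_of_nonneg_left (inner_paddedInput_le hZ a b m) (sq_nonneg τ)) 1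
  rw [volterraKernel_eq_one_add hc hlam, paddedInput_succ, paddedInput_succ,
    paddedInput_apply_zero ha, paddedInput_apply_zero hb]

end PaddedInput

theorem gram_eq_volterraKernel_of_le {d n : ℕ} {M τ lam : ℝ}
    {Z : ℕ → EuclideanSpace ℝ (Fin d)} (hZ : ∀ m, m < n → ‖Z m‖ ≤ M)
    (hlam : lam ^ 2 < 1 - τ ^ 2 * M ^ 2) {G : ℕ → ℕ → ℝ}
    (hG0 : ∀ i, i ≤ n → G i 0 = 1 / (1 - lam ^ 2))
    (hGrec : ∀ i j, 1 ≤ j → j ≤ i → i ≤ n →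
      G i j = 1 + lam ^ 2 * G (i - 1) (j - 1) / (1 - τ ^ 2 * ⟪Z (n - i), Z (n - j)⟫)) :
    ∀ j i, j ≤ i → i ≤ n →
      G i j = volterraKernel lam τ (paddedInput n Z (n - i)) (paddedInput n Z (n - j)) := by
  intro j
  induction j with
  | zero =>
    intro i _ hin
    have hlam1 : lam ^ 2 < 1 := by nlinarith [sq_nonneg (τ * M)]
    rw [hG0 i hin, Nat.sub_zero, paddedInput_self, volterraKernel_zero_right hlam1]
  | succ j ih =>
    intro i hji hin
    rw [hGrec i (j + 1) (by omega) hji hin, Nat.add_sub_cancel, ih (i - 1) (by omega) (by omega),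
      volterraKernel_paddedInput_eq_one_add hZ hlam (a := n - i) (b := n - (j + 1))
        (by omega) (by omega),
      show n - i + 1 = n - (i - 1) by omega, show n - (j + 1) + 1 = n - j by omega]

theorem gram_recursion_correct_general {d : ℕ} (M τ lam : ℝ)
    (hlam0 : 0 < lam) (hlam : lam < Real.sqrt (1 - τ ^ 2 * M ^ 2))
    (n : ℕ) (Z : ℕ → EuclideanSpace ℝ (Fin d)) (hZ : ∀ m, m < n → ‖Z m‖ ≤ M)
    (G : ℕ → ℕ → ℝ)
    (hG0 : ∀ i, i ≤ n → G i 0 = 1 / (1 - lam ^ 2) ∧ G 0 i = 1 / (1 - lam ^ 2))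
    (hGrec : ∀ i j, 1 ≤ j → j ≤ i → i ≤ n →
      G i j = 1 + lam ^ 2 * G (i - 1) (j - 1) /
        (1 - τ ^ 2 * ⟪Z (n - i), Z (n - j)⟫))
    (hGsym : ∀ i j, i ≤ n → j ≤ n → G i j = G j i) :
    ∀ i j, 1 ≤ i → i ≤ n → 1 ≤ j → j ≤ n →
      G i j = volterraKernel lam τ (paddedInput n Z (n - i)) (paddedInput n Z (n - j)) := by
  have hlam2 : lam ^ 2 < 1 - τ ^ 2 * M ^ 2 := (Real.lt_sqrt hlam0.le).mp hlam
  have hG := gram_eq_volterraKernel_of_le hZ hlam2 (fun i hi => (hG0 i hi).1) hGrec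
  intro i j _ hin _ hjn
  rcases le_total j i with hji | hij
  · exact hG j i hji hin
  · rw [hGsym i j hin hjn, volterraKernel_comm]
    exact hG i j hij hjn

/-- Correctness of the Gram recursion.  Under `M > 0`, `τ²M² < 1`,
`0 < λ < √(1-τ²M²)`, if `G` satisfies the initial conditions
`G_{i,0} = G_{0,j} = 1/(1-λ²)`, the recursion
`G_{i,j} = 1 + λ² G_{i-1,j-1}/(1 - τ²⟨Z_{-(n-i)}, Z_{-(n-j)}⟩)` for `1 ≤ j ≤ i ≤ n`, and
symmetry, then `G_{i,j} = K(Z^{-n+1}_{-(n-i)}, Z^{-n+1}_{-(n-j)})` for all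
`1 ≤ i, j ≤ n`, where `K` is the Volterra kernel in closed form and the truncated inputs
are padded with zeros (making `K` of the all-zero padding equal `1/(1-λ²)`). -/
theorem gram_recursion_correct {d : ℕ} (M τ lam : ℝ)
    (hM : 0 < M) (hτ : 0 < τ) (hτM : τ ^ 2 * M ^ 2 < 1)
    (hlam0 : 0 < lam) (hlam : lam < Real.sqrt (1 - τ ^ 2 * M ^ 2))
    (n : ℕ) (Z : ℕ → EuclideanSpace ℝ (Fin d)) (hZ : ∀ m, m < n → ‖Z m‖ ≤ M)
    (G : ℕ → ℕ → ℝ)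
    (hG0 : ∀ i, i ≤ n → G i 0 = 1 / (1 - lam ^ 2) ∧ G 0 i = 1 / (1 - lam ^ 2))
    (hGrec : ∀ i j, 1 ≤ j → j ≤ i → i ≤ n →
      G i j = 1 + lam ^ 2 * G (i - 1) (j - 1) /
        (1 - τ ^ 2 * ⟪Z (n - i), Z (n - j)⟫))
    (hGsym : ∀ i j, i ≤ n → j ≤ n → G i j = G j i) :
    ∀ i j, 1 ≤ i → i ≤ n → 1 ≤ j → j ≤ n →
      G i j = volterraKernel lam τ (paddedInput n Z (n - i)) (paddedInput n Z (n - j)) :=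
  gram_recursion_correct_general M τ lam hlam0 hlam n Z hZ G hG0 hGrec hGsym
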